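/- Let x ∈ (0,1) and let m ∈ ℕ with m ≥ 1. Then the real part of ∑_{n=0}^∞ (n + i x)^{-(2m+1)} equals (-1)^m ( 2 (2π)^{2m} / (2m)! ) · ∑_{k=0}^∞ ζ'_R(−2(m+k)) (2π x)^{2k} / (2k)!. -/

import Mathlib

/-!
For `n ≥ 1 > |x|`, expand `(n + i x)^{-(2m+1)} = n^{-(2m+1)} (1 + i x / n)^{-(2m+1)}` as a
binomial series in `i x / n`. Its real part keeps only the even powers, and summing over `n`
(the double series converges absolutely) turns `∑ₙ n^{-(2m+2k+1)}` into `ζ(2m+2k+1)`; the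
`n = 0` term `(i x)^{-(2m+1)}` is purely imaginary. Differentiating the functional equation
`ζ(1-s) = 2 (2π)^{-s} Γ(s) cos(πs/2) ζ(s)` at `s = 2n+1`, where the cosine vanishes, gives
`ζ'(-2n) = (-1)^n (2n)! ζ(2n+1) / (2 (2π)^{2n})`, and the two series agree term by term.
-/

open Complex Real

lemma Complex.I_pow_two_mul (k : ℕ) : I ^ (2 * k) = ((-1 : ℝ) ^ k : ℝ) := by
  rw [pow_mul, I_sq]
  push_cast
  rfl

lemma re_inv_I_mul_ofReal_pow_odd (x : ℝ) (m : ℕ) : ((I * x) ^ (2 * m + 1))⁻¹.re = 0 := by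
  have : (I * x) ^ (2 * m + 1) = I * (((-1) ^ m * x ^ (2 * m + 1) : ℝ) : ℂ) := by
    rw [mul_pow, pow_succ, I_pow_two_mul]
    push_cast
    ring
  rw [inv_re, this, I_mul_re, ofReal_im, neg_zero, zero_div]

lemma HasSum.re_of_ofReal_mul_I_pow {f : ℕ → ℝ} {s : ℂ}
    (h : HasSum (fun p ↦ (f p : ℂ) * I ^ p) s) :
    HasSum (fun k ↦ (-1) ^ k * f (2 * k)) s.re := by
  have hre := Complex.hasSum_re h
  simp only [re_ofReal_mul] at hre
  have hodd : ∀ p ∉ Set.range (2 * ·), f p * (I ^ p).re = 0 := by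
    rintro p hp
    obtain ⟨k, rfl⟩ : Odd p := by simpa using hp
    rw [pow_succ, I_pow_two_mul, mul_comm, re_ofReal_mul, I_re, mul_zero, zero_mul]
  convert (Function.Injective.hasSum_iff (mul_right_injective₀ two_ne_zero) hodd).mpr hre
    using 2 with k
  rw [Function.comp_apply, I_pow_two_mul, ofReal_re, mul_comm]

lemma hasSum_re_inv_ofReal_add_I_mul_pow (N : ℕ) {a x : ℝ} (hxa : |x| < a) :
    HasSum (fun k ↦ (-1) ^ k * (2 * k + N).choose N * x ^ (2 * k) / a ^ (2 * k + N + 1))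
      (((a + I * x) ^ (N + 1))⁻¹).re := by
  have ha : 0 < a := (abs_nonneg x).trans_lt hxa
  have hr : ‖I * ((-(x / a) : ℝ) : ℂ)‖ < 1 := by
    rw [norm_mul, norm_I, one_mul, norm_real, norm_neg, norm_div, Real.norm_eq_abs,
      Real.norm_eq_abs, abs_of_pos ha, div_lt_one ha]
    exact hxa
  have hexp :=
    (hasSum_choose_mul_geometric_of_norm_lt_one N hr).mul_left (((a : ℂ) ^ (N + 1))⁻¹)
  have hsum : HasSum
      (fun p ↦ (((p + N).choose N * (-(x / a)) ^ p / a ^ (N + 1) : ℝ) : ℂ) * I ^ p)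
      (((a + I * x) ^ (N + 1))⁻¹) := by
    have ha' : (a : ℂ) ≠ 0 := ofReal_ne_zero.mpr ha.ne'
    rw [show (a : ℂ) + I * x = a * (1 - I * ((-(x / a) : ℝ) : ℂ)) by
        push_cast; field_simp; ring,
      mul_pow, mul_inv, ← one_div ((1 - _) ^ _)]
    refine hexp.congr_fun fun p ↦ ?_
    push_cast
    ring
  convert hsum.re_of_ofReal_mul_I_pow using 2 with k
  rw [(even_two_mul k).neg_pow, div_pow]
  field_simp
  ring

lemma summable_inv_natCast_add_I_mul_pow (x : ℝ) {N : ℕ} (hN : 1 < N) :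
    Summable fun n : ℕ ↦ (((n : ℂ) + I * x) ^ N)⁻¹ := by
  rw [← summable_nat_add_iff 1]
  refine .of_norm_bounded ((summable_nat_add_iff 1).mpr (Real.summable_one_div_nat_pow.mpr hN))
    fun j ↦ ?_
  have hre : ((j + 1 : ℕ) : ℝ) ≤ ‖((j + 1 : ℕ) : ℂ) + I * x‖ := by
    simpa using re_le_norm (((j + 1 : ℕ) : ℂ) + I * x)
  rw [norm_inv, norm_pow, one_div]
  gcongr

lemma hasSum_one_div_nat_add_one_pow_re_riemannZeta {k : ℕ} (hk : 1 < k) :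
    HasSum (fun j : ℕ ↦ 1 / ((j : ℝ) + 1) ^ k) (riemannZeta k).re := by
  have hsum : Summable (fun j : ℕ ↦ 1 / ((j : ℝ) + 1) ^ k) := by
    simpa using (summable_nat_add_iff 1).mpr (Real.summable_one_div_nat_pow.mpr hk)
  have hterm : ∀ j : ℕ, 1 / ((j : ℂ) + 1) ^ k = ((1 / ((j : ℝ) + 1) ^ k : ℝ) : ℂ) := by
    intro j
    push_cast
    rfl
  convert hsum.hasSum
  rw [zeta_eq_tsum_one_div_nat_add_one_cpow (by rw [natCast_re]; exact_mod_cast hk)]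
  simp_rw [cpow_natCast, hterm, ← ofReal_tsum, ofReal_re]

lemma tsum_re_inv_nat_add_one_add_I_mul_pow {N : ℕ} (hN : 1 ≤ N) {x : ℝ} (hx : |x| < 1) :
    ∑' j : ℕ, ((((j + 1 : ℕ) : ℂ) + I * x) ^ (N + 1))⁻¹.re =
      ∑' k : ℕ, (-1) ^ k * (2 * k + N).choose N * x ^ (2 * k) *
        (riemannZeta (2 * k + N + 1 : ℕ)).re := by
  set c : ℕ → ℝ := fun k ↦ (-1) ^ k * (2 * k + N).choose N * x ^ (2 * k)
  have hexpand (j : ℕ) : HasSum (fun k ↦ c k / ((j + 1 : ℕ) : ℝ) ^ (2 * k + N + 1))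
      ((((j + 1 : ℕ) : ℂ) + I * x) ^ (N + 1))⁻¹.re := by
    have hxj : |x| < ((j + 1 : ℕ) : ℝ) := hx.trans_le (by simp)
    have := hasSum_re_inv_ofReal_add_I_mul_pow N hxj
    rwa [ofReal_natCast] at this
  have hchoose : Summable fun k : ℕ ↦ ((2 * k + N).choose N : ℝ) * x ^ (2 * k) :=
    (summable_choose_mul_geometric_of_norm_lt_one (r := x) N (by rwa [Real.norm_eq_abs]))
      |>.comp_injective (mul_right_injective₀ (two_ne_zero' ℕ))
  have hsummable : Summable (Function.uncurry fun j k ↦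
      c k / ((j + 1 : ℕ) : ℝ) ^ (2 * k + N + 1)) := by
    have hzeta : Summable fun j : ℕ ↦ 1 / ((j + 1 : ℕ) : ℝ) ^ (N + 1) :=
      (summable_nat_add_iff 1).mpr (Real.summable_one_div_nat_pow.mpr (by omega))
    have hnonneg (k : ℕ) : 0 ≤ ((2 * k + N).choose N : ℝ) * x ^ (2 * k) :=
      mul_nonneg (Nat.cast_nonneg _) ((even_two_mul k).pow_nonneg x)
    refine .of_norm_bounded (hzeta.mul_of_nonneg hchoose (fun j ↦ ?_) hnonneg)
      fun ⟨j, k⟩ ↦ ?_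
    · simp only [Pi.zero_apply]
      positivity
    simp only [Function.uncurry_apply_pair, c, norm_div, norm_mul, norm_pow, norm_neg, norm_one,
      one_pow, one_mul, Real.norm_eq_abs, Nat.abs_cast, (even_two_mul k).pow_abs, one_div]
    rw [div_eq_inv_mul]
    gcongr
    · exact hnonneg k
    · simp
    · omega
  calc ∑' j : ℕ, ((((j + 1 : ℕ) : ℂ) + I * x) ^ (N + 1))⁻¹.re
      = ∑' (j : ℕ) (k : ℕ), c k / ((j + 1 : ℕ) : ℝ) ^ (2 * k + N + 1) :=
        tsum_congr fun j ↦ (hexpand j).tsum_eq.symm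
    _ = ∑' (k : ℕ) (j : ℕ), c k / ((j + 1 : ℕ) : ℝ) ^ (2 * k + N + 1) :=
        hsummable.tsum_comm.symm
    _ = _ := tsum_congr fun k ↦ by
        simpa [div_eq_mul_one_div (c k)] using
          ((hasSum_one_div_nat_add_one_pow_re_riemannZeta (by omega : 1 < 2 * k + N + 1)).mul_left
            (c k)).tsum_eq

lemma hasDerivAt_riemannZeta_one_sub_of_cos_eq_zero {s₀ : ℂ} (hs₀ : 1 < s₀.re)
    (hcos : Complex.cos (π * s₀ / 2) = 0) :
    HasDerivAt (fun s ↦ riemannZeta (1 - s))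
      (2 * (2 * π) ^ (-s₀) * Gamma s₀ * riemannZeta s₀ *
        (-Complex.sin (π * s₀ / 2) * (π / 2))) s₀ := by
  have hregular : ∀ s : ℂ, 1 < s.re → (∀ k : ℕ, s ≠ -k) ∧ s ≠ 1 := by
    refine fun s hs ↦ ⟨?_, by rintro rfl; simp at hs⟩
    rintro k rfl
    simp only [neg_re, natCast_re] at hs
    linarith [k.cast_nonneg (α := ℝ)]
  set G : ℂ → ℂ := fun s ↦ 2 * (2 * π) ^ (-s) * Gamma s * riemannZeta s
  have hfe : (fun s ↦ G s * Complex.cos (π * s / 2)) =ᶠ[nhds s₀]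
      fun s ↦ riemannZeta (1 - s) := by
    filter_upwards [(isOpen_lt continuous_const continuous_re).mem_nhds hs₀] with s hs
    rw [riemannZeta_one_sub (hregular s hs).1 (hregular s hs).2]
    ring
  have hG : DifferentiableAt ℂ G s₀ := by
    have h2π : (2 * π : ℂ) ≠ 0 := by exact_mod_cast two_pi_pos.ne'
    exact (((differentiableAt_const 2).mul (differentiableAt_id.neg.const_cpow (Or.inl h2π))).mul
      (differentiableAt_Gamma _ (hregular s₀ hs₀).1)).mul
      (differentiableAt_riemannZeta (hregular s₀ hs₀).2)
  have hc : HasDerivAt (fun s ↦ Complex.cos (π * s / 2))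
      (-Complex.sin (π * s₀ / 2) * (π / 2)) s₀ :=
    (Complex.hasDerivAt_cos _).comp s₀
      (by simpa using ((hasDerivAt_id s₀).const_mul (π : ℂ)).div_const 2)
  have hprod := hG.hasDerivAt.mul hc
  rw [hcos, mul_zero, zero_add] at hprod
  exact hprod.congr_of_eventuallyEq hfe.symm

lemma deriv_riemannZeta_neg_two_mul_nat {n : ℕ} (hn : n ≠ 0) :
    deriv riemannZeta (-(2 * n)) =
      (((-1) ^ n * (2 * n).factorial / (2 * (2 * π) ^ (2 * n)) : ℝ) : ℂ) *
        riemannZeta (2 * n + 1) := by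
  set s₀ : ℂ := 2 * n + 1
  have hs₀ : 1 < s₀.re := by simpa [s₀] using Nat.pos_of_ne_zero hn
  have harg : π * s₀ / 2 = ((π / 2 + n * π : ℝ) : ℂ) := by
    push_cast
    ring
  have hcos : Complex.cos (π * s₀ / 2) = 0 := by
    rw [harg, ← ofReal_cos, Real.cos_add_nat_mul_pi, Real.cos_pi_div_two, mul_zero, ofReal_zero]
  have hsin : Complex.sin (π * s₀ / 2) = (-1) ^ n := by
    rw [harg, ← ofReal_sin, Real.sin_add_nat_mul_pi, Real.sin_pi_div_two, mul_one]
    push_cast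
    rfl
  have hpow : (2 * π : ℂ) ^ (-s₀) = ((2 * π : ℂ) ^ (2 * n + 1))⁻¹ := by
    rw [cpow_neg, show s₀ = ((2 * n + 1 : ℕ) : ℂ) by push_cast; rfl, cpow_natCast]
  have hΓ : Gamma s₀ = (2 * n).factorial := by
    rw [show s₀ = ((2 * n : ℕ) : ℂ) + 1 by push_cast; rfl, Complex.Gamma_nat_eq_factorial]
  have hderiv :
      HasDerivAt (fun s ↦ riemannZeta (1 - s)) (-deriv riemannZeta (-(2 * n))) s₀ := by
    have hne : 1 - s₀ ≠ 1 := by simpa using ne_zero_of_one_lt_re hs₀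
    rw [show -(2 * n : ℂ) = 1 - s₀ by ring]
    exact (differentiableAt_riemannZeta hne).hasDerivAt.comp_const_sub 1 s₀
  have key := hderiv.unique (hasDerivAt_riemannZeta_one_sub_of_cos_eq_zero hs₀ hcos)
  rw [hpow, hΓ, hsin, neg_eq_iff_eq_neg] at key
  have hπ : (π : ℂ) ≠ 0 := ofReal_ne_zero.mpr pi_ne_zero
  rw [key]
  push_cast
  field_simp
  ring

lemma neg_one_pow_mul_re_deriv_riemannZeta_neg_two_mul_add {m : ℕ} (hm : m ≠ 0) (k : ℕ)
    (x : ℝ) :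
    (-1) ^ m * (2 * (2 * π) ^ (2 * m) / (2 * m).factorial) *
        ((deriv riemannZeta (-(2 * ((m : ℂ) + k)))).re * (2 * π * x) ^ (2 * k) /
          (2 * k).factorial) =
      (-1) ^ k * (2 * k + 2 * m).choose (2 * m) * x ^ (2 * k) *
        (riemannZeta (2 * k + 2 * m + 1 : ℕ)).re := by
  rw [show -(2 * ((m : ℂ) + k)) = -(2 * ((m + k : ℕ) : ℂ)) by push_cast; ring,
    deriv_riemannZeta_neg_two_mul_nat (by omega), re_ofReal_mul,
    show 2 * ((m + k : ℕ) : ℂ) + 1 = ((2 * k + 2 * m + 1 : ℕ) : ℂ) by push_cast; ring,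
    show 2 * (m + k) = 2 * k + 2 * m by ring, ← Nat.add_choose_mul_factorial_mul_factorial]
  have hsign : (-1 : ℝ) ^ m * (-1) ^ (m + k) = (-1) ^ k := by
    rw [← pow_add, ← add_assoc, ← two_mul, pow_add, pow_mul, neg_one_sq, one_pow, one_mul]
  push_cast
  field_simp
  linear_combination ((2 * k + 2 * m).choose (2 * m) *
    (riemannZeta (2 * (k + m : ℂ) + 1)).re * (2 * π) ^ (2 * m) * (2 * π * x) ^ (2 * k)) * hsign

/-- For `x ∈ (0,1)` and `m ≥ 1`, the real part of `ζ_H(2m+1, ix) = ∑_{n≥0} (n+ix)^{-(2m+1)}`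
is given by a series involving the values `ζ'_R(-2(m+k))` of the derivative of the
Riemann zeta function at negative even integers. -/
theorem re_hurwitzZeta_pos_odd (x : ℝ) (hx : x ∈ Set.Ioo (0 : ℝ) 1) (m : ℕ) (hm : 1 ≤ m) :
    (∑' n : ℕ, ((n : ℂ) + Complex.I * x) ^ (-(2 * (m : ℂ) + 1))).re =
      (-1) ^ m * (2 * (2 * π) ^ (2 * m) / (Nat.factorial (2 * m) : ℝ)) *
        ∑' k : ℕ, (deriv riemannZeta (-(2 * ((m : ℂ) + (k : ℂ))))).re *
          (2 * π * x) ^ (2 * k) / (Nat.factorial (2 * k) : ℝ) := by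
  have hx' : |x| < 1 := abs_lt.mpr ⟨by linarith [hx.1], hx.2⟩
  have hcpow (z : ℂ) : z ^ (-(2 * (m : ℂ) + 1)) = (z ^ (2 * m + 1))⁻¹ := by
    rw [show 2 * (m : ℂ) + 1 = ((2 * m + 1 : ℕ) : ℂ) by push_cast; rfl, cpow_neg,
      cpow_natCast]
  have hsum := summable_inv_natCast_add_I_mul_pow x (N := 2 * m + 1) (by omega)
  simp_rw [hcpow]
  rw [hsum.tsum_eq_zero_add, add_re, Nat.cast_zero, zero_add, re_inv_I_mul_ofReal_pow_odd,
    zero_add, re_tsum ((summable_nat_add_iff 1).mpr hsum),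
    tsum_re_inv_nat_add_one_add_I_mul_pow (by omega) hx', ← tsum_mul_left]
  exact tsum_congr fun k ↦
    (neg_one_pow_mul_re_deriv_riemannZeta_neg_two_mul_add (by omega) k x).symm
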